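/- arXiv:0705.2699 — 6 statements merged into one kernel-verified Lean document; each statement's English description precedes it below -/
import Mathlib

section
/- For every real y and every complex s with 0 < Re(s) < 1, the function y ↦ e^{sy}/(1 + e^y) is integrable on ℝ and π/sin(πs) = ∫_ℝ e^{sy}/(1 + e^y) dy. -/
/-!
The substitution `t = sigmoid y = eʸ / (1 + eʸ)` maps `ℝ` onto `(0, 1)` with
`dt = t (1 - t) dy`, and `t / (1 - t) = eʸ`, `1 - t = (1 + eʸ)⁻¹`. It turns
`∫ e^{sy} / (1 + eʸ) dy` into the Beta integral `B(s, 1 - s) = Γ(s) Γ(1 - s)`,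
which equals `π / sin (π s)` by the reflection formula.
-/

open MeasureTheory Set

namespace Real

lemma one_sub_sigmoid (y : ℝ) : 1 - sigmoid y = (1 + exp y)⁻¹ := by
  rw [← sigmoid_neg, sigmoid_def, neg_neg]

lemma sigmoid_div_one_sub_sigmoid (y : ℝ) : sigmoid y / (1 - sigmoid y) = exp y := by
  have := (sigmoid_pos y).ne'
  rw [← sigmoid_neg, ← sigmoid_mul_rexp_neg, exp_neg]
  field_simp

lemma abs_sigmoid_mul_one_sub_sigmoid (y : ℝ) :
    |sigmoid y * (1 - sigmoid y)| = sigmoid y * (1 - sigmoid y) :=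
  abs_of_pos (mul_pos (sigmoid_pos y) (sub_pos.2 (sigmoid_lt_one y)))

section ChangeOfVariables

variable {E : Type*} [NormedAddCommGroup E] [NormedSpace ℝ E]

lemma integrableOn_Ioo_iff_integrable_comp_sigmoid (g : ℝ → E) :
    IntegrableOn g (Ioo 0 1) ↔
      Integrable (fun y => (sigmoid y * (1 - sigmoid y)) • g (sigmoid y)) := by
  rw [← range_sigmoid, ← image_univ, integrableOn_image_iff_integrableOn_abs_deriv_smul
    MeasurableSet.univ (fun y _ => (hasDerivAt_sigmoid y).hasDerivWithinAt)
    sigmoid_injective.injOn, integrableOn_univ]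
  simp only [abs_sigmoid_mul_one_sub_sigmoid]

lemma integral_Ioo_eq_integral_comp_sigmoid (g : ℝ → E) :
    ∫ x in Ioo 0 1, g x = ∫ y, (sigmoid y * (1 - sigmoid y)) • g (sigmoid y) := by
  rw [← range_sigmoid, ← image_univ, integral_image_eq_integral_abs_deriv_smul
    MeasurableSet.univ (fun y _ => (hasDerivAt_sigmoid y).hasDerivWithinAt)
    sigmoid_injective.injOn, Measure.restrict_univ]
  simp only [abs_sigmoid_mul_one_sub_sigmoid]

end ChangeOfVariables

end Real

namespace Complex

lemma integrableOn_betaIntegrand {u v : ℂ} (hu : 0 < u.re) (hv : 0 < v.re) :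
    IntegrableOn (fun x : ℝ => (x : ℂ) ^ (u - 1) * (1 - (x : ℂ)) ^ (v - 1)) (Ioo 0 1) :=
  ((intervalIntegrable_iff_integrableOn_Ioc_of_le zero_le_one).1
    (betaIntegral_convergent hu hv)).mono_set Ioo_subset_Ioc_self

lemma betaIntegral_eq_integral_Ioo (u v : ℂ) :
    betaIntegral u v = ∫ x in Ioo (0 : ℝ) 1, (x : ℂ) ^ (u - 1) * (1 - (x : ℂ)) ^ (v - 1) := by
  rw [betaIntegral, intervalIntegral.integral_of_le zero_le_one, integral_Ioc_eq_integral_Ioo]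

lemma betaIntegral_one_sub {s : ℂ} (h0 : 0 < s.re) (h1 : s.re < 1) :
    betaIntegral s (1 - s) = Real.pi / sin (Real.pi * s) := by
  have hB := Gamma_mul_Gamma_eq_betaIntegral h0 (by simpa using h1 : 0 < (1 - s).re)
  rwa [Gamma_mul_Gamma_one_sub, add_sub_cancel, Gamma_one, one_mul, eq_comm] at hB

lemma ofReal_cpow_eq_exp {t : ℝ} (ht : 0 < t) (a : ℂ) : (t : ℂ) ^ a = exp (Real.log t * a) := by
  rw [cpow_def_of_ne_zero (ofReal_ne_zero.2 ht.ne'), ofReal_log ht.le]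

end Complex

open Complex in
lemma sigmoid_smul_betaIntegrand_one_sub (s : ℂ) (y : ℝ) :
    (Real.sigmoid y * (1 - Real.sigmoid y)) •
        ((Real.sigmoid y : ℂ) ^ (s - 1) * (1 - (Real.sigmoid y : ℂ)) ^ ((1 - s) - 1)) =
      exp (s * y) / ((1 + Real.exp y : ℝ) : ℂ) := by
  set p := Real.sigmoid y
  set q := 1 - Real.sigmoid y
  have hp : 0 < p := Real.sigmoid_pos y
  have hq : 0 < q := sub_pos.2 (Real.sigmoid_lt_one y)
  -- After taking logarithms both sides are linear in `log p` and `log q`.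
  have hy : (y : ℂ) = Real.log p - Real.log q := by
    rw [← ofReal_sub, ← Real.log_div hp.ne' hq.ne', Real.sigmoid_div_one_sub_sigmoid,
      Real.log_exp]
  have hpq : ((p * q : ℝ) : ℂ) = exp (Real.log p + Real.log q) := by
    rw [← ofReal_add, ← ofReal_exp, ← Real.log_mul hp.ne' hq.ne', Real.exp_log (by positivity)]
  have hq' : ((1 + Real.exp y : ℝ) : ℂ)⁻¹ = exp (Real.log q) := by
    rw [← ofReal_inv, ← Real.one_sub_sigmoid, ← ofReal_exp, Real.exp_log hq]
  have hqc : (1 - p : ℂ) = q := by push_cast [q, p]; rfl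
  rw [real_smul, hqc, ofReal_cpow_eq_exp hp, ofReal_cpow_eq_exp hq, hpq,
    div_eq_mul_inv, hq', hy, ← exp_add, ← exp_add, ← exp_add]
  ring_nf

/-- Two-sided Laplace representation of π/sin(πs) on the strip 0 < Re s < 1. -/
theorem pi_div_sin_laplace (s : ℂ) (h0 : 0 < s.re) (h1 : s.re < 1) :
    MeasureTheory.Integrable
        (fun y : ℝ => Complex.exp (s * y) / ((1 + Real.exp y : ℝ) : ℂ)) ∧
      (Real.pi : ℂ) / Complex.sin ((Real.pi : ℂ) * s) =
        ∫ y : ℝ, Complex.exp (s * y) / ((1 + Real.exp y : ℝ) : ℂ) := by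
  simp_rw [← sigmoid_smul_betaIntegrand_one_sub s]
  refine ⟨(Real.integrableOn_Ioo_iff_integrable_comp_sigmoid _).1
    (Complex.integrableOn_betaIntegrand h0 (by simpa using h1)), ?_⟩
  rw [← Real.integral_Ioo_eq_integral_comp_sigmoid
      (fun x : ℝ => (x : ℂ) ^ (s - 1) * (1 - (x : ℂ)) ^ ((1 - s) - 1)),
    ← Complex.betaIntegral_eq_integral_Ioo, Complex.betaIntegral_one_sub h0 h1]
end

section
/- Let m ≥ 0 be an integer and (a_k)_{k ≥ m} complex numbers with |a_k|^{1/k} → 0 as k → ∞. Let E(z) := ∑_{k ≥ m} a_k z^k. Let q ≥ 0 and p complex with Re(p) > 1 - m·q. Then for every complex z, the double sum converges absolutely and ∑_{n ≥ 1} (μ(n)/n^p) · E(z/n^q) = ∑_{k ≥ m} (a_k / ζ(p + kq)) · z^k, where μ is the Möbius function. -/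
/-!
Since `|μ n| ≤ 1` and `‖z / n ^ q‖ ^ k ≤ ‖z‖ ^ k n ^ (-m q)` whenever `a k ≠ 0`, the double series
is dominated by `ζ(Re p + m q) · ∑ ‖a k‖ ‖z‖ ^ k`, which is finite by the root test. Hence the
two summations can be interchanged, and for fixed `k` the sum over `n` is the Dirichlet series
of `μ` at `p + k q`, namely `1 / ζ(p + k q)`.
-/

open ArithmeticFunction Filter Topology
open scoped ArithmeticFunction.Moebius

lemma summable_norm_mul_pow_of_tendsto_rpow_one_div {E : Type*} [SeminormedAddCommGroup E]
    {a : ℕ → E} (ha : Tendsto (fun k : ℕ => ‖a k‖ ^ (1 / (k : ℝ))) atTop (𝓝 0)) (r : ℝ) :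
    Summable fun k => ‖a k‖ * r ^ k := by
  have hbase : Tendsto (fun k : ℕ => ‖a k‖ ^ (1 / (k : ℝ)) * |r|) atTop (𝓝 0) := by
    simpa using ha.mul_const |r|
  refine Summable.of_norm_bounded_eventually_nat summable_geometric_two ?_
  filter_upwards [hbase.eventually_lt_const one_half_pos, eventually_ne_atTop 0] with k hk hk0
  have hpow : ‖‖a k‖ * r ^ k‖ = (‖a k‖ ^ (1 / (k : ℝ)) * |r|) ^ k := by
    rw [mul_pow, one_div, Real.rpow_inv_natCast_pow (norm_nonneg _) hk0, norm_mul, norm_norm,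
      norm_pow, Real.norm_eq_abs]
  rw [hpow, one_div]
  exact pow_le_pow_left₀ (by positivity) (by simpa using hk.le) k

lemma hasSum_moebius_div_cpow {s : ℂ} (hs : 1 < s.re) :
    HasSum (fun n : ℕ => (μ (n + 1) : ℂ) / ((n + 1 : ℕ) : ℂ) ^ s) (riemannZeta s)⁻¹ := by
  have hL : LSeries (fun n => (μ n : ℂ)) s = (riemannZeta s)⁻¹ := by
    refine eq_inv_of_mul_eq_one_left ?_
    rw [mul_comm, ← LSeries_one_eq_riemannZeta hs, LSeries_one_mul_Lseries_moebius hs]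
  have hsum := (LSeriesSummable_moebius_iff.mpr hs).LSeriesHasSum
  rw [hL, LSeriesHasSum, ← hasSum_nat_add_iff' 1] at hsum
  simpa [LSeries.term_of_ne_zero] using hsum

lemma norm_moebius_div_cpow_le (n : ℕ) (s : ℂ) :
    ‖(μ n : ℂ) / (n : ℂ) ^ s‖ ≤ (n : ℝ) ^ (-s.re) := by
  rcases n.eq_zero_or_pos with rfl | hn
  · simpa using Real.rpow_nonneg le_rfl (-s.re)
  rw [norm_div, Complex.norm_natCast_cpow_of_pos hn, Real.rpow_neg (Nat.cast_nonneg n), ← one_div]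
  gcongr
  exact_mod_cast abs_moebius_le_one

lemma div_cpow_mul_mul_div_rpow_pow {x : ℝ} (hx : 0 < x) (w p c z : ℂ) (q : ℝ) (k : ℕ) :
    w / (x : ℂ) ^ p * (c * (z / ((x ^ q : ℝ) : ℂ)) ^ k) =
      c * z ^ k * (w / (x : ℂ) ^ (p + k * q)) := by
  have hx' : (x : ℂ) ≠ 0 := Complex.ofReal_ne_zero.mpr hx.ne'
  rw [Complex.ofReal_cpow hx.le, div_pow, ← Complex.cpow_nat_mul, Complex.cpow_add _ _ hx']
  have : (x : ℂ) ^ p ≠ 0 := Complex.cpow_ne_zero_iff.mpr (Or.inl hx')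
  have : (x : ℂ) ^ ((k : ℂ) * q) ≠ 0 := Complex.cpow_ne_zero_iff.mpr (Or.inl hx')
  field_simp

section DoubleSeries

variable {c s : ℕ → ℂ} {σ : ℝ}

lemma summable_norm_mul_moebius_div_cpow (hc : Summable fun k => ‖c k‖) (hσ : 1 < σ)
    (hs : ∀ k, c k ≠ 0 → σ ≤ (s k).re) :
    Summable fun nk : ℕ × ℕ =>
      ‖c nk.2 * ((μ (nk.1 + 1) : ℂ) / ((nk.1 + 1 : ℕ) : ℂ) ^ s nk.2)‖ := by
  have hdir : Summable fun n : ℕ => ((n + 1 : ℕ) : ℝ) ^ (-σ) :=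
    (summable_nat_add_iff 1).mpr (Real.summable_nat_rpow.mpr (by linarith))
  refine .of_nonneg_of_le (fun _ => norm_nonneg _) (fun ⟨n, k⟩ => ?_)
    (hdir.mul_of_nonneg hc (fun _ => by positivity) (fun _ => norm_nonneg _))
  by_cases hck : c k = 0
  · simp [hck]
  rw [norm_mul, mul_comm]
  gcongr
  calc _ ≤ ((n + 1 : ℕ) : ℝ) ^ (-(s k).re) := norm_moebius_div_cpow_le _ _
    _ ≤ _ := Real.rpow_le_rpow_of_exponent_le (by simp) (by linarith [hs k hck])

lemma tsum_tsum_mul_moebius_div_cpow (hc : Summable fun k => ‖c k‖) (hσ : 1 < σ)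
    (hs : ∀ k, c k ≠ 0 → σ ≤ (s k).re) :
    ∑' n : ℕ, ∑' k : ℕ, c k * ((μ (n + 1) : ℂ) / ((n + 1 : ℕ) : ℂ) ^ s k) =
      ∑' k, c k / riemannZeta (s k) := by
  have hsum : Summable (Function.uncurry fun (n k : ℕ) =>
      c k * ((μ (n + 1) : ℂ) / ((n + 1 : ℕ) : ℂ) ^ s k)) :=
    (summable_norm_mul_moebius_div_cpow hc hσ hs).of_norm
  rw [← hsum.tsum_comm]
  refine tsum_congr fun k => ?_
  by_cases hck : c k = 0
  · simp [hck]
  rw [tsum_mul_left, (hasSum_moebius_div_cpow (by linarith [hs k hck])).tsum_eq, div_eq_mul_inv]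

end DoubleSeries

/-- Lemma 2.1: interchanging a Möbius-weighted Dirichlet sum with an entire power
series: ∑_{n ≥ 1} (μ(n)/n^p) E(z/n^q) = ∑_{k ≥ m} (a_k/ζ(p+kq)) z^k, where
E(z) = ∑_{k ≥ m} a_k z^k and |a_k|^(1/k) → 0. -/
theorem moebius_sum_interchange (m : ℕ) (a : ℕ → ℂ) (ha0 : ∀ k < m, a k = 0)
    (hdecay : Filter.Tendsto (fun k : ℕ => ‖a k‖ ^ (1 / (k : ℝ)))
      Filter.atTop (nhds 0))
    (q : ℝ) (hq : 0 ≤ q) (p : ℂ) (hp : 1 - m * q < p.re) (z : ℂ) :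
    Summable (fun nk : ℕ × ℕ =>
        ‖(ArithmeticFunction.moebius (nk.1 + 1) : ℂ) / ((nk.1 + 1 : ℕ) : ℂ) ^ p *
          (a nk.2 * (z / ((((nk.1 + 1 : ℕ) : ℝ) ^ q : ℝ) : ℂ)) ^ nk.2)‖) ∧
      (∑' n : ℕ, (ArithmeticFunction.moebius (n + 1) : ℂ) / ((n + 1 : ℕ) : ℂ) ^ p *
          ∑' k : ℕ, a k * (z / ((((n + 1 : ℕ) : ℝ) ^ q : ℝ) : ℂ)) ^ k) =
        ∑' k : ℕ, a k / riemannZeta (p + (k : ℂ) * (q : ℂ)) * z ^ k := by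
  have hterm (n k : ℕ) :
      (μ (n + 1) : ℂ) / ((n + 1 : ℕ) : ℂ) ^ p *
          (a k * (z / ((((n + 1 : ℕ) : ℝ) ^ q : ℝ) : ℂ)) ^ k) =
        a k * z ^ k * ((μ (n + 1) : ℂ) / ((n + 1 : ℕ) : ℂ) ^ (p + k * q)) := by
    simpa using
      div_cpow_mul_mul_div_rpow_pow (x := ((n + 1 : ℕ) : ℝ)) (by positivity) _ p (a k) z q k
  have hc : Summable fun k => ‖a k * z ^ k‖ := by
    simpa only [norm_mul, norm_pow] using
      summable_norm_mul_pow_of_tendsto_rpow_one_div hdecay ‖z‖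
  have hσ : 1 < p.re + m * q := by linarith
  have hs (k : ℕ) (hk : a k * z ^ k ≠ 0) : p.re + m * q ≤ (p + k * q).re := by
    have hmk : m ≤ k := by_contra fun h => left_ne_zero_of_mul hk (ha0 k (by omega))
    simpa using mul_le_mul_of_nonneg_right (Nat.cast_le.mpr hmk : (m : ℝ) ≤ k) hq
  refine ⟨by simpa only [hterm] using summable_norm_mul_moebius_div_cpow hc hσ hs, ?_⟩
  simp_rw [← tsum_mul_left, hterm, tsum_tsum_mul_moebius_div_cpow hc hσ hs, div_mul_eq_mul_div]
end

section
/- Let u be complex with 0 < Re(u) < 1. Then ∫₀^∞ |v^{u-1} J(v)| dv is finite and Γ(u)/(1-u) = ∫₀^∞ v^{u-1} J(v) dv, where J(v) := (1 - e^{-v})/v for v ≠ 0 and J(0) := 1. -/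
/-!
Write `J(v) = ∫₀¹ e^{-vt} dt` and swap the order of integration: for fixed `t > 0` the
`v`-integral `∫₀^∞ v^{u-1} e^{-vt} dv` is `Γ(u) t^{-u}`, and `∫₀¹ t^{-u} dt = 1/(1-u)`.
Fubini applies because the same computation with `Re u` in place of `u` bounds the double
integral of the absolute value by `Γ(Re u) ∫₀¹ t^{-Re u} dt < ∞`.
-/

open MeasureTheory Set Complex

lemma integral_cexp_neg_mul_Ioc_zero_one {v : ℝ} (hv : v ≠ 0) :
    ∫ t in Ioc (0 : ℝ) 1, cexp (-(t * v)) = (((1 - Real.exp (-v)) / v : ℝ) : ℂ) := by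
  have hv' : (-v : ℂ) ≠ 0 := by exact_mod_cast neg_ne_zero.mpr hv
  simp_rw [← intervalIntegral.integral_of_le zero_le_one, neg_mul_eq_mul_neg,
    mul_comm _ (-(v : ℂ)), integral_exp_mul_complex hv']
  push_cast
  rw [mul_one, mul_zero, exp_zero, div_neg, ← neg_div, neg_sub]

lemma norm_cpow_mul_cexp_neg_mul {a : ℂ} {r t : ℝ} (ht : 0 < t) :
    ‖(t : ℂ) ^ (a - 1) * cexp (-(r * t))‖ = t ^ (a.re - 1) * Real.exp (-(r * t)) := by
  rw [norm_mul, norm_cpow_eq_rpow_re_of_pos ht, ← ofReal_mul, ← ofReal_neg, norm_exp_ofReal,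
    sub_re, one_re]

lemma integrableOn_cpow_mul_cexp_neg_mul_Ioi {a : ℂ} {r : ℝ} (ha : 0 < a.re) (hr : 0 < r) :
    IntegrableOn (fun t : ℝ => (t : ℂ) ^ (a - 1) * cexp (-(r * t))) (Ioi 0) := by
  refine (integrable_norm_iff ?_).mp ?_
  · refine ContinuousOn.aestronglyMeasurable (fun t ht => ?_) measurableSet_Ioi
    exact ((continuousAt_ofReal_cpow_const _ _ (Or.inr (ne_of_gt ht))).mul
      (by fun_prop)).continuousWithinAt
  · refine IntegrableOn.congr_fun
      (integrableOn_rpow_mul_exp_neg_mul_rpow (by linarith : -1 < a.re - 1) one_pos hr)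
      (fun t ht => ?_) measurableSet_Ioi
    rw [norm_cpow_mul_cexp_neg_mul ht, Real.rpow_one, neg_mul]

lemma integrableOn_one_div_rpow_Ioc_zero_one {a : ℝ} (ha : a < 1) :
    IntegrableOn (fun t : ℝ => (1 / t) ^ a) (Ioc 0 1) := by
  refine (intervalIntegral.intervalIntegrable_rpow' (by linarith : -1 < -a)).1.congr_fun
    (fun t ht => ?_) measurableSet_Ioc
  dsimp only
  rw [one_div, Real.inv_rpow ht.1.le, Real.rpow_neg ht.1.le]

lemma integral_cpow_neg_Ioc_zero_one {u : ℂ} (hu : u.re < 1) :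
    ∫ t in Ioc (0 : ℝ) 1, (t : ℂ) ^ (-u) = 1 / (1 - u) := by
  have hne : 1 - u ≠ 0 := by
    rintro h
    rw [← sub_eq_zero.mp h, one_re] at hu
    exact lt_irrefl _ hu
  rw [← intervalIntegral.integral_of_le zero_le_one, integral_cpow (Or.inl (by simpa using hu)),
    neg_add_eq_sub]
  push_cast
  rw [one_cpow, zero_cpow hne, sub_zero]

lemma integrable_cpow_mul_cexp_neg_mul_prod {u : ℂ} (h0 : 0 < u.re) (h1 : u.re < 1) :
    Integrable (fun p : ℝ × ℝ => (p.1 : ℂ) ^ (u - 1) * cexp (-(p.2 * p.1)))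
      ((volume.restrict (Ioi 0)).prod (volume.restrict (Ioc 0 1))) := by
  have hmeas : AEStronglyMeasurable (fun p : ℝ × ℝ => (p.1 : ℂ) ^ (u - 1) * cexp (-(p.2 * p.1)))
      ((volume.restrict (Ioi 0)).prod (volume.restrict (Ioc 0 1))) := by
    rw [Measure.prod_restrict]
    refine ContinuousOn.aestronglyMeasurable (fun p hp => ?_)
      (measurableSet_Ioi.prod measurableSet_Ioc)
    exact (((continuousAt_ofReal_cpow_const _ _ (Or.inr (ne_of_gt hp.1))).comp
      continuousAt_fst).mul (by fun_prop)).continuousWithinAt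
  refine (integrable_prod_iff' hmeas).2 ⟨?_, ?_⟩
  · filter_upwards [self_mem_ae_restrict measurableSet_Ioc] with t ht
    exact integrableOn_cpow_mul_cexp_neg_mul_Ioi h0 ht.1
  · refine IntegrableOn.congr_fun
      ((integrableOn_one_div_rpow_Ioc_zero_one h1).mul_const (Real.Gamma u.re))
      (fun t ht => ?_) measurableSet_Ioc
    rw [← Real.integral_rpow_mul_exp_neg_mul_Ioi h0 ht.1]
    exact setIntegral_congr_fun measurableSet_Ioi fun v hv => (norm_cpow_mul_cexp_neg_mul hv).symm

lemma integral_cpow_mul_cexp_neg_mul_Ioi {u : ℂ} (hu : 0 < u.re) {t : ℝ} (ht : 0 < t) :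
    ∫ v in Ioi (0 : ℝ), (v : ℂ) ^ (u - 1) * cexp (-(t * v)) = Gamma u * (t : ℂ) ^ (-u) := by
  rw [Complex.integral_cpow_mul_exp_neg_mul_Ioi hu ht, one_div,
    inv_cpow _ _ (by rw [arg_ofReal_of_nonneg ht.le]; exact Real.pi_ne_zero.symm), ← cpow_neg,
    mul_comm]

/-- Lemma 3.4: Mellin transform representation of Γ(u)/(1-u) on 0 < Re u < 1,
with J(v) = (1 - e^(-v))/v. -/
theorem gamma_div_one_sub_mellin (u : ℂ) (h0 : 0 < u.re) (h1 : u.re < 1) :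
    MeasureTheory.IntegrableOn
        (fun v : ℝ => (v : ℂ) ^ (u - 1) * (((1 - Real.exp (-v)) / v : ℝ) : ℂ))
        (Set.Ioi 0) ∧
      Complex.Gamma u / (1 - u) =
        ∫ v in Set.Ioi (0:ℝ), (v : ℂ) ^ (u - 1) * (((1 - Real.exp (-v)) / v : ℝ) : ℂ) := by
  have hF := integrable_cpow_mul_cexp_neg_mul_prod h0 h1
  have hJ : (fun v : ℝ => ∫ t in Ioc (0 : ℝ) 1, (v : ℂ) ^ (u - 1) * cexp (-(t * v)))
      =ᵐ[volume.restrict (Ioi 0)]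
        fun v : ℝ => (v : ℂ) ^ (u - 1) * (((1 - Real.exp (-v)) / v : ℝ) : ℂ) := by
    filter_upwards [self_mem_ae_restrict measurableSet_Ioi] with v hv
    rw [integral_const_mul, integral_cexp_neg_mul_Ioc_zero_one (ne_of_gt hv)]
  refine ⟨hF.integral_prod_left.congr hJ, ?_⟩
  calc Gamma u / (1 - u)
      = ∫ t in Ioc (0 : ℝ) 1, Gamma u * (t : ℂ) ^ (-u) := by
        rw [integral_const_mul, integral_cpow_neg_Ioc_zero_one h1, mul_one_div]
    _ = ∫ t in Ioc (0 : ℝ) 1, ∫ v in Ioi (0 : ℝ), (v : ℂ) ^ (u - 1) * cexp (-(t * v)) :=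
        setIntegral_congr_fun measurableSet_Ioc fun t ht =>
          (integral_cpow_mul_cexp_neg_mul_Ioi h0 ht.1).symm
    _ = ∫ v in Ioi (0 : ℝ), ∫ t in Ioc (0 : ℝ) 1, (v : ℂ) ^ (u - 1) * cexp (-(t * v)) :=
        (integral_integral_swap hF).symm
    _ = _ := integral_congr_ae hJ
end

section
/- Let p, z be complex with either (Re(p) > 0 and Re(z) > 0) or (0 < Re(p) < 1 and Re(z) ≥ 0, z ≠ 0). Then (1/Γ(p)) e^{-z} ∫₀^∞ (j^{p-1}/(1+j)) e^{-zj} dj = Γ(1-p, z), where Γ(q, z) := ∫_z^∞ t^{q-1} e^{-t} dt is the upper incomplete gamma function. -/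
/-!
Write `1 / (1 + j) = ∫₀^∞ e^{-(1+j)s} ds` and exchange the two integrals; the double integral
converges absolutely because `Re p > 0` controls `j → 0` and either `Re z > 0` or `Re p < 1`
controls `j → ∞`. The inner integral is then the Gamma integral with complex scale,
`∫₀^∞ j^{p-1} e^{-(z+s)j} dj = Γ(p) (z+s)^{-p}`, and `e^{-z} e^{-s} = e^{-(z+s)}`.
-/

open MeasureTheory Set Filter Complex Topology

lemma norm_ofReal_cpow_mul_exp_neg_mul {t : ℝ} (ht : 0 < t) (w b : ℂ) :
    ‖(t : ℂ) ^ w * exp (-b * t)‖ = t ^ w.re * Real.exp (-b.re * t) := by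
  rw [norm_mul, norm_cpow_eq_rpow_re_of_pos ht, norm_exp]
  simp

lemma integrableOn_rpow_mul_exp_neg_mul_Ioi {a c : ℝ} (ha : -1 < a) (hc : 0 < c) :
    IntegrableOn (fun t : ℝ => t ^ a * Real.exp (-c * t)) (Ioi 0) := by
  simpa only [Real.rpow_one] using integrableOn_rpow_mul_exp_neg_mul_rpow ha one_pos hc

lemma integrableOn_cpow_mul_exp_neg_mul_Ioi {a b : ℂ} (ha : 0 < a.re) (hb : 0 < b.re) :
    IntegrableOn (fun t : ℝ => (t : ℂ) ^ (a - 1) * exp (-b * t)) (Ioi 0) := by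
  refine (integrableOn_rpow_mul_exp_neg_mul_Ioi (a := a.re - 1) (by linarith) hb).mono'
    (by fun_prop) ?_
  filter_upwards [ae_restrict_mem measurableSet_Ioi] with t ht
  rw [norm_ofReal_cpow_mul_exp_neg_mul ht, sub_re, one_re]

lemma hasDerivAt_integral_cpow_mul_exp_neg_mul {a b : ℂ} (ha : 0 < a.re) (hb : 0 < b.re) :
    HasDerivAt (fun w : ℂ => ∫ t in Ioi (0 : ℝ), (t : ℂ) ^ (a - 1) * exp (-w * t))
      (∫ t in Ioi (0 : ℝ), -((t : ℂ) ^ a * exp (-b * t))) b := by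
  have hnhds : {w : ℂ | b.re / 2 < w.re} ∈ 𝓝 b :=
    (isOpen_lt continuous_const continuous_re).mem_nhds (half_lt_self hb)
  refine (hasDerivAt_integral_of_dominated_loc_of_deriv_le
    (F := fun w (t : ℝ) => (t : ℂ) ^ (a - 1) * exp (-w * t))
    (F' := fun w (t : ℝ) => -((t : ℂ) ^ a * exp (-w * t)))
    (bound := fun t : ℝ => t ^ a.re * Real.exp (-(b.re / 2) * t)) hnhds
    (.of_forall fun w => by fun_prop) (integrableOn_cpow_mul_exp_neg_mul_Ioi ha hb)
    (by fun_prop) ?_ (integrableOn_rpow_mul_exp_neg_mul_Ioi (by linarith) (half_pos hb)) ?_).2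
  · filter_upwards [ae_restrict_mem measurableSet_Ioi] with t (ht : 0 < t) w (hw : _ < _)
    rw [norm_neg, norm_ofReal_cpow_mul_exp_neg_mul ht]
    gcongr
  · filter_upwards [ae_restrict_mem measurableSet_Ioi] with t (ht : 0 < t) w _
    have hpow : (t : ℂ) ^ (a - 1) * t = (t : ℂ) ^ a := by
      simpa using (cpow_add (a - 1) 1 (ofReal_ne_zero.mpr ht.ne')).symm
    refine ((((hasDerivAt_neg w).mul_const (t : ℂ)).cexp).const_mul
      ((t : ℂ) ^ (a - 1))).congr_deriv ?_
    rw [← hpow]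
    ring

/-- Both sides are holomorphic in `b` on the right half-plane and agree for real `b > 0`
by `integral_cpow_mul_exp_neg_mul_Ioi`. -/
lemma integral_cpow_mul_exp_neg_mul_Ioi_of_re_pos {a b : ℂ} (ha : 0 < a.re) (hb : 0 < b.re) :
    ∫ t in Ioi (0 : ℝ), (t : ℂ) ^ (a - 1) * exp (-b * t) = Gamma a * b ^ (-a) := by
  set U : Set ℂ := {w | 0 < w.re}
  have hU : IsOpen U := isOpen_lt continuous_const continuous_re
  have hF : AnalyticOnNhd ℂ
      (fun w : ℂ => ∫ t in Ioi (0 : ℝ), (t : ℂ) ^ (a - 1) * exp (-w * t)) U :=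
    DifferentiableOn.analyticOnNhd (fun w hw =>
      (hasDerivAt_integral_cpow_mul_exp_neg_mul ha hw).differentiableAt.differentiableWithinAt) hU
  have hG : AnalyticOnNhd ℂ (fun w : ℂ => Gamma a * w ^ (-a)) U :=
    DifferentiableOn.analyticOnNhd (fun w hw => ((differentiableAt_id.cpow_const
      (mem_slitPlane_iff.mpr (Or.inl hw))).const_mul _).differentiableWithinAt) hU
  have hreal : ∀ r : ℝ, 0 < r →
      ∫ t in Ioi (0 : ℝ), (t : ℂ) ^ (a - 1) * exp (-(r : ℂ) * t) =
        Gamma a * (r : ℂ) ^ (-a) := by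
    intro r hr
    simp only [neg_mul]
    rw [integral_cpow_mul_exp_neg_mul_Ioi ha hr, mul_comm, one_div,
      inv_cpow _ _ (by rw [arg_ofReal_of_nonneg hr.le]; exact Real.pi_ne_zero.symm), cpow_neg]
  have hto : Tendsto ((↑) : ℝ → ℂ) (𝓝[>] 1) (𝓝[≠] 1) :=
    tendsto_nhdsWithin_of_tendsto_nhds_of_eventually_within _
      ((continuous_ofReal.tendsto' 1 1 ofReal_one).mono_left nhdsWithin_le_nhds)
      (eventually_nhdsWithin_of_forall (s := Ioi 1) fun r hr => by simpa using hr.ne')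
  refine hF.eqOn_of_preconnected_of_frequently_eq hG (convex_halfSpace_re_gt 0).isPreconnected
    (by simp [U]) (hto.frequently ?_) hb
  exact (eventually_nhdsWithin_of_forall (s := Ioi 1) fun r (hr : 1 < r) =>
    hreal r (by linarith)).frequently

lemma integrableOn_rpow_div_one_add_Ioi {a : ℝ} (ha0 : -1 < a) (ha1 : a < 0) :
    IntegrableOn (fun j : ℝ => j ^ a / (1 + j)) (Ioi 0) := by
  have hnear : IntegrableOn (fun j : ℝ => j ^ a / (1 + j)) (Ioc 0 1) := by
    refine (intervalIntegral.intervalIntegrable_rpow' (a := 0) (b := 1) ha0).1.mono'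
      (Measurable.aestronglyMeasurable (by fun_prop)) ?_
    filter_upwards [ae_restrict_mem measurableSet_Ioc] with j hj
    have hj0 : 0 < j := hj.1
    rw [Real.norm_of_nonneg (by positivity)]
    exact div_le_self (by positivity) (by linarith)
  have hfar : IntegrableOn (fun j : ℝ => j ^ a / (1 + j)) (Ioi 1) := by
    refine (integrableOn_Ioi_rpow_of_lt (show a - 1 < -1 by linarith) one_pos).mono'
      (Measurable.aestronglyMeasurable (by fun_prop)) ?_
    filter_upwards [ae_restrict_mem measurableSet_Ioi] with j (hj : 1 < j)
    have hj0 : 0 < j := one_pos.trans hj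
    rw [Real.norm_of_nonneg (by positivity), Real.rpow_sub hj0, Real.rpow_one]
    gcongr
    linarith
  rw [← Ioc_union_Ioi_eq_Ioi zero_le_one]
  exact hnear.union hfar

lemma integrableOn_rpow_mul_exp_neg_mul_div_one_add_Ioi {a c : ℝ} (ha : -1 < a) (hc : 0 ≤ c)
    (h : 0 < c ∨ a < 0) :
    IntegrableOn (fun j : ℝ => j ^ a * Real.exp (-c * j) / (1 + j)) (Ioi 0) := by
  rcases h with hc_pos | ha1
  · refine (integrableOn_rpow_mul_exp_neg_mul_rpow ha one_pos hc_pos).mono'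
      (Measurable.aestronglyMeasurable (by fun_prop)) ?_
    filter_upwards [ae_restrict_mem measurableSet_Ioi] with j (hj : 0 < j)
    rw [Real.norm_of_nonneg (by positivity), Real.rpow_one, neg_mul]
    exact div_le_self (by positivity) (by linarith)
  · refine (integrableOn_rpow_div_one_add_Ioi ha ha1).mono'
      (Measurable.aestronglyMeasurable (by fun_prop)) ?_
    filter_upwards [ae_restrict_mem measurableSet_Ioi] with j (hj : 0 < j)
    rw [Real.norm_of_nonneg (by positivity)]
    gcongr
    exact mul_le_of_le_one_right (by positivity) (Real.exp_le_one_iff.mpr (by nlinarith))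

lemma integral_exp_neg_mul_Ioi_of_re_pos {b : ℂ} (hb : 0 < b.re) :
    ∫ s in Ioi (0 : ℝ), exp (-b * s) = b⁻¹ := by
  rw [integral_exp_mul_complex_Ioi (by simpa using hb)]
  simp

lemma integrable_cpow_mul_exp_mul_exp_one_add {p z : ℂ} (hp : 0 < p.re) (hz : 0 ≤ z.re)
    (h : 0 < z.re ∨ p.re < 1) :
    Integrable (Function.uncurry fun j s : ℝ =>
        (j : ℂ) ^ (p - 1) * exp (-z * j) * exp (-(1 + j) * s))
      ((volume.restrict (Ioi 0)).prod (volume.restrict (Ioi 0))) := by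
  refine (integrable_prod_iff (by fun_prop)).2 ⟨?_, ?_⟩
  · filter_upwards [ae_restrict_mem measurableSet_Ioi] with j (hj : 0 < j)
    refine (integrableOn_exp_mul_complex_Ioi (a := -(1 + j)) ?_ 0).const_mul
      ((j : ℂ) ^ (p - 1) * exp (-z * j))
    simp only [neg_re, add_re, one_re, ofReal_re]
    linarith
  · refine (integrableOn_rpow_mul_exp_neg_mul_div_one_add_Ioi (a := p.re - 1) (c := z.re)
      (by linarith) hz (h.imp_right fun h => by linarith)).congr ?_
    filter_upwards [ae_restrict_mem measurableSet_Ioi] with j (hj : 0 < j)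
    have hnorm : ∀ s : ℝ, ‖(j : ℂ) ^ (p - 1) * exp (-z * j) * exp (-(1 + j) * s)‖ =
        j ^ (p.re - 1) * Real.exp (-z.re * j) * Real.exp (-(1 + j) * s) := by
      intro s
      rw [norm_mul, norm_ofReal_cpow_mul_exp_neg_mul hj, norm_exp]
      simp
    simp only [Function.uncurry_apply_pair, hnorm]
    rw [integral_const_mul, integral_exp_mul_Ioi (by linarith), mul_zero, Real.exp_zero,
      neg_div_neg_eq, one_div, div_eq_mul_inv]

lemma integral_cpow_div_one_add_mul_exp_Ioi {p z : ℂ} (hp : 0 < p.re) (hz : 0 ≤ z.re)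
    (h : 0 < z.re ∨ p.re < 1) :
    ∫ j in Ioi (0 : ℝ), (j : ℂ) ^ (p - 1) / (1 + j) * exp (-z * j) =
      Gamma p * ∫ s in Ioi (0 : ℝ), (z + s) ^ (-p) * exp (-s) := by
  calc ∫ j in Ioi (0 : ℝ), (j : ℂ) ^ (p - 1) / (1 + j) * exp (-z * j)
      = ∫ j in Ioi (0 : ℝ), ∫ s in Ioi (0 : ℝ),
          (j : ℂ) ^ (p - 1) * exp (-z * j) * exp (-(1 + j) * s) := by
        refine setIntegral_congr_fun measurableSet_Ioi fun j (hj : 0 < j) => ?_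
        rw [integral_const_mul, integral_exp_neg_mul_Ioi_of_re_pos (by simp; linarith)]
        ring
    _ = ∫ s in Ioi (0 : ℝ), ∫ j in Ioi (0 : ℝ),
          (j : ℂ) ^ (p - 1) * exp (-z * j) * exp (-(1 + j) * s) :=
        integral_integral_swap (integrable_cpow_mul_exp_mul_exp_one_add hp hz h)
    _ = ∫ s in Ioi (0 : ℝ), Gamma p * ((z + s) ^ (-p) * exp (-s)) := by
        refine setIntegral_congr_fun measurableSet_Ioi fun s (hs : 0 < s) => ?_
        have hexp : ∀ j : ℝ, (j : ℂ) ^ (p - 1) * exp (-z * j) * exp (-(1 + j) * s) =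
            exp (-s) * ((j : ℂ) ^ (p - 1) * exp (-(z + s) * j)) := fun j => by
          rw [mul_left_comm, mul_assoc, ← exp_add, ← exp_add]
          ring_nf
        simp only [hexp]
        rw [integral_const_mul, integral_cpow_mul_exp_neg_mul_Ioi_of_re_pos hp (by simp; linarith)]
        ring
    _ = Gamma p * ∫ s in Ioi (0 : ℝ), (z + s) ^ (-p) * exp (-s) := integral_const_mul _ _

/-- Lemma 4.1: (1/Γ(p)) e^(-z) I(p, z) = Γ(1-p, z), where
I(p, z) = ∫₀^∞ (j^(p-1)/(1+j)) e^(-zj) dj and the upper incomplete gamma function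
is Γ(1-p, z) = ∫_z^∞ t^(-p) e^(-t) dt, parametrized as t = z + s, s ∈ (0, ∞). -/
theorem I_eq_incomplete_gamma (p z : ℂ)
    (h : (0 < p.re ∧ 0 < z.re) ∨ (0 < p.re ∧ p.re < 1 ∧ 0 ≤ z.re ∧ z ≠ 0)) :
    (1 / Complex.Gamma p) * Complex.exp (-z) *
        (∫ j in Set.Ioi (0:ℝ), (j : ℂ) ^ (p - 1) / (1 + (j : ℂ)) * Complex.exp (-z * j)) =
      ∫ s in Set.Ioi (0:ℝ), (z + (s : ℂ)) ^ (-p) * Complex.exp (-(z + (s : ℂ))) := by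
  obtain ⟨hp, hz, hcase⟩ : 0 < p.re ∧ 0 ≤ z.re ∧ (0 < z.re ∨ p.re < 1) := by
    rcases h with ⟨hp, hz⟩ | ⟨hp, hp1, hz, -⟩
    exacts [⟨hp, hz.le, .inl hz⟩, ⟨hp, hz, .inr hp1⟩]
  rw [integral_cpow_div_one_add_mul_exp_Ioi hp hz hcase, one_div, mul_comm (Gamma p)⁻¹,
    mul_assoc, inv_mul_cancel_left₀ (Gamma_ne_zero_of_re_pos hp), ← integral_const_mul]
  refine setIntegral_congr_fun measurableSet_Ioi fun s _ => ?_
  rw [neg_add, exp_add]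
  ring
end

section
/- If Re(β) > 0, then for every complex z, φ(1 + β, z) = (1/Γ(β)) ∫₀¹ (1-j)^{β-1} e^{zj} dj, where φ(B, z) := ∑_{k ≥ 0} z^k / Γ(B + k). -/
/-!
Expand `exp (z x) = ∑ (z x)^k / k!` under the integral. The series is dominated on `(0, 1]`
by `exp ‖z‖ * (1 - x)^(Re β - 1)`, which is integrable since `Re β > 0`, so it may be
integrated term by term, and the `k`-th term is `z^k / k!` times the Beta integral
`B(k + 1, β) = k! Γ(β) / Γ(k + 1 + β)`.
-/

open MeasureTheory Complex Nat

lemma Complex.norm_ofReal_cpow_le_rpow_re {x : ℝ} (hx : 0 ≤ x) (w : ℂ) :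
    ‖(x : ℂ) ^ w‖ ≤ x ^ w.re := by
  rcases hx.lt_or_eq with hx | rfl
  · rw [norm_cpow_eq_rpow_re_of_pos hx]
  · rcases eq_or_ne w 0 with rfl | hw
    · simp
    · simp [ofReal_zero, zero_cpow hw, Real.rpow_nonneg le_rfl]

lemma integral_pow_mul_one_sub_cpow {β : ℂ} (hβ : 0 < β.re) (k : ℕ) :
    ∫ x in (0 : ℝ)..1, (x : ℂ) ^ k * ((1 - x : ℝ) : ℂ) ^ (β - 1) =
      k ! * Gamma β / Gamma (k + 1 + β) := by
  have hk : 0 < ((k : ℂ) + 1).re := by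
    rw [add_re, natCast_re, one_re]
    positivity
  have hB := betaIntegral_eq_Gamma_mul_div _ _ hk hβ
  rw [Gamma_nat_eq_factorial, betaIntegral, add_sub_cancel_right] at hB
  simpa only [cpow_natCast, ofReal_sub, ofReal_one] using hB

lemma norm_pow_mul_one_sub_cpow_le {x : ℝ} (hx : x ∈ Set.Icc 0 1) (k : ℕ) (β : ℂ) :
    ‖(x : ℂ) ^ k * ((1 - x : ℝ) : ℂ) ^ (β - 1)‖ ≤ (1 - x) ^ (β.re - 1) := by
  have hx_pow : ‖(x : ℂ) ^ k‖ ≤ 1 := by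
    simpa [abs_of_nonneg hx.1] using pow_le_one₀ hx.1 hx.2
  have hx_cpow := norm_ofReal_cpow_le_rpow_re (sub_nonneg.2 hx.2) (β - 1)
  rw [sub_re, one_re] at hx_cpow
  simpa using mul_le_mul hx_pow hx_cpow (norm_nonneg _) zero_le_one

lemma intervalIntegrable_one_sub_rpow {r : ℝ} (hr : -1 < r) :
    IntervalIntegrable (fun x : ℝ => (1 - x) ^ r) volume 0 1 := by
  simpa using
    ((intervalIntegral.intervalIntegrable_rpow' (a := 0) (b := 1) hr).comp_sub_left 1).symm

lemma hasSum_integral_one_sub_cpow_mul_exp {β : ℂ} (hβ : 0 < β.re) (z : ℂ) :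
    HasSum (fun k : ℕ => z ^ k / k ! *
        ∫ x in (0 : ℝ)..1, (x : ℂ) ^ k * ((1 - x : ℝ) : ℂ) ^ (β - 1))
      (∫ x in (0 : ℝ)..1, ((1 - x : ℝ) : ℂ) ^ (β - 1) * exp (z * x)) := by
  simp only [← intervalIntegral.integral_const_mul]
  refine intervalIntegral.hasSum_integral_of_dominated_convergence
    (fun k x => ‖z‖ ^ k / k ! * (1 - x) ^ (β.re - 1)) (fun k => by fun_prop) (fun k => ?_)
    (.of_forall fun x _ => (Real.summable_pow_div_factorial ‖z‖).mul_right _) ?_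
    (.of_forall fun x _ => ?_)
  · refine .of_forall fun x hx => ?_
    rw [Set.uIoc_of_le zero_le_one] at hx
    rw [norm_mul, norm_div, norm_pow, norm_natCast]
    gcongr
    exact norm_pow_mul_one_sub_cpow_le (Set.Ioc_subset_Icc_self hx) k β
  · simp only [tsum_mul_right]
    exact (intervalIntegrable_one_sub_rpow (by linarith)).const_mul _
  · have hexp :=
      (NormedSpace.expSeries_div_hasSum_exp (z * x)).mul_left (((1 - x : ℝ) : ℂ) ^ (β - 1))
    rw [← exp_eq_exp_ℂ] at hexp
    have hterm (k : ℕ) : z ^ k / k ! * ((x : ℂ) ^ k * ((1 - x : ℝ) : ℂ) ^ (β - 1)) =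
        ((1 - x : ℝ) : ℂ) ^ (β - 1) * ((z * x) ^ k / k !) := by
      ring
    simpa only [hterm] using hexp

/-- Euler integral representation: for Re β > 0,
φ(1+β, z) = (1/Γ(β)) ∫₀¹ (1-j)^(β-1) e^(zj) dj. -/
theorem phi_integral_representation (β : ℂ) (hβ : 0 < β.re) (z : ℂ) :
    (∑' k : ℕ, z ^ k / Complex.Gamma (1 + β + k)) =
      (1 / Complex.Gamma β) *
        ∫ j in (0:ℝ)..1, ((1 - j : ℝ) : ℂ) ^ (β - 1) * Complex.exp (z * j) := by
  have hΓ := Gamma_ne_zero_of_re_pos hβ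
  have hsum := (hasSum_integral_one_sub_cpow_mul_exp hβ z).mul_left (1 / Gamma β)
  simp only [integral_pow_mul_one_sub_cpow hβ] at hsum
  rw [← hsum.tsum_eq]
  congr 1
  funext k
  rw [show 1 + β + k = k + 1 + β by ring]
  have hk : (k ! : ℂ) ≠ 0 := Nat.cast_ne_zero.2 k.factorial_ne_zero
  field_simp
end

section
/- Let β > -2 be real, w ≥ 0 an integer, and define (1/2) H(r, β, 2w) := (-1)^{w+1} ∑_{k ≥ w+1} (-1)^k r^{2k} / Γ(1 + β + 2k). Then r ↦ H(r, β, 2w) is strictly increasing on the interval [0, 1]. -/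
/-!
With `k = w + 1` and `a n = 1 / Γ(1 + β + 2n)`, the function is twice the alternating series
`∑ j, (-1)^j a (k + j) r^(2(k + j))`. Grouping consecutive terms writes it as a series of pairs
`a n u^n - a (n + 1) u^(n + 1)` in `u = r²`, each strictly increasing on `[0, 1]`: its derivative
in `u` is positive there because `a n / a (n + 1) = (1 + β + 2n)(2 + β + 2n) > 1 + 1/n`.
-/

open Real Set

theorem StrictMonoOn.tsum {ι α : Type*} [PartialOrder α] [Nonempty ι] {s : Set α}
    {g : ι → α → ℝ} (hg : ∀ i, StrictMonoOn (g i) s)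
    (hs : ∀ x ∈ s, Summable fun i => g i x) :
    StrictMonoOn (fun x => ∑' i, g i x) s := fun _ hx _ hy hxy =>
  (hs _ hx).tsum_lt_tsum (i := Classical.arbitrary ι)
    (fun i => (hg i).monotoneOn hx hy hxy.le) (hg _ hx hy hxy) (hs _ hy)

theorem Summable.hasSum_neg_one_pow_mul {f : ℕ → ℝ} (hf : Summable f) :
    HasSum (fun m => f (2 * m) - f (2 * m + 1)) (∑' j, (-1) ^ j * f j) := by
  set g : ℕ → ℝ := fun j => (-1) ^ j * f j
  have hg : Summable g := hf.norm.of_norm_bounded fun j => by simp [g]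
  have heven : Summable fun m => g (2 * m) := hg.comp_injective (mul_right_injective₀ two_ne_zero)
  have hodd : Summable fun m => g (2 * m + 1) :=
    hg.comp_injective ((add_left_injective 1).comp (mul_right_injective₀ two_ne_zero))
  rw [← tsum_even_add_odd heven hodd]
  convert heven.hasSum.add hodd.hasSum using 2 with m
  simp [g, pow_succ, sub_eq_add_neg]

theorem Real.Gamma_add_two {x : ℝ} (hx : 0 < x) : Gamma (x + 2) = (x + 1) * x * Gamma x := by
  rw [show x + 2 = x + 1 + 1 by ring, Gamma_add_one (by positivity), Gamma_add_one hx.ne', mul_assoc]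

theorem summable_inv_Gamma_add_two_mul {c : ℝ} (hc : 0 < c) :
    Summable fun j : ℕ => (Gamma (c + 2 * j))⁻¹ := by
  refine summable_of_ratio_norm_eventually_le (r := 1 / 2) (by norm_num) ?_
  filter_upwards [Filter.eventually_ge_atTop 1] with j hj
  have hj' : (1 : ℝ) ≤ j := by exact_mod_cast hj
  have hx : 0 < c + 2 * j := by positivity
  have hΓ := Gamma_pos_of_pos hx
  rw [Nat.cast_succ, mul_add_one, ← add_assoc, Gamma_add_two hx, norm_inv, norm_inv,
    norm_of_nonneg hΓ.le, norm_of_nonneg (by positivity)]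
  have h2 : 2 ≤ (c + 2 * j + 1) * (c + 2 * j) := by nlinarith
  rw [one_div, ← mul_inv]
  exact inv_anti₀ (by positivity) (by nlinarith [mul_le_mul_of_nonneg_right h2 hΓ.le])

theorem strictMonoOn_mul_pow_sub_mul_pow {a b : ℝ} {k : ℕ} (hb : 0 ≤ b)
    (hab : (k + 1) * b < k * a) :
    StrictMonoOn (fun u : ℝ => a * u ^ k - b * u ^ (k + 1)) (Icc 0 1) := by
  obtain ⟨n, rfl⟩ : ∃ n, k = n + 1 :=
    Nat.exists_eq_succ_of_ne_zero (by rintro rfl; simp at hab; linarith)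
  refine strictMonoOn_of_deriv_pos (convex_Icc 0 1) (by fun_prop) fun u hu => ?_
  rw [interior_Icc] at hu
  have hd : HasDerivAt (fun u : ℝ => a * u ^ (n + 1) - b * u ^ (n + 1 + 1))
      (u ^ n * ((n + 1) * a - (n + 2) * b * u)) u := by
    refine (((hasDerivAt_pow (n + 1) u).const_mul a).sub
      ((hasDerivAt_pow (n + 1 + 1) u).const_mul b)).congr_deriv ?_
    push_cast
    ring
  rw [hd.deriv]
  push_cast at hab
  have hbu : b * u ≤ b := mul_le_of_le_one_right hb hu.2.le
  exact mul_pos (pow_pos hu.1 n) (by nlinarith)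

-- The `k`-th term of the Mittag-Leffler series `E_{2,1+β}(-r²)`, without its sign `(-1)^k`.
noncomputable def mittagLefflerTerm (β : ℝ) (k : ℕ) (r : ℝ) : ℝ :=
  r ^ (2 * k) / Gamma (1 + β + 2 * k)

theorem summable_mittagLefflerTerm {β : ℝ} (hβ : -2 < β) {k : ℕ} (hk : 1 ≤ k) {r : ℝ}
    (hr : r ∈ Icc 0 1) : Summable fun j => mittagLefflerTerm β (j + k) r := by
  have hk' : (1 : ℝ) ≤ k := by exact_mod_cast hk
  refine (summable_inv_Gamma_add_two_mul (c := 1 + β + 2 * k) (by linarith)).of_norm_bounded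
    fun j => ?_
  have harg : 1 + β + 2 * ((j + k : ℕ) : ℝ) = 1 + β + 2 * k + 2 * j := by push_cast; ring
  have hΓ : 0 < Gamma (1 + β + 2 * k + 2 * j) :=
    Gamma_pos_of_pos (add_pos_of_pos_of_nonneg (by linarith) (by positivity))
  rw [mittagLefflerTerm, harg, norm_div, norm_of_nonneg hΓ.le, norm_pow, norm_of_nonneg hr.1,
    ← one_div]
  exact div_le_div_of_nonneg_right (pow_le_one₀ hr.1 hr.2) hΓ.le

theorem mittagLefflerTerm_sub_succ_strictMonoOn {β : ℝ} (hβ : -2 < β) {k : ℕ} (hk : 1 ≤ k) :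
    StrictMonoOn (fun r => mittagLefflerTerm β k r - mittagLefflerTerm β (k + 1) r)
      (Icc 0 1) := by
  have hk' : (1 : ℝ) ≤ k := by exact_mod_cast hk
  set X := 1 + β + 2 * (k : ℝ) with hX
  have hX1 : 1 < X := by linarith
  have hΓ : 0 < Gamma X := Gamma_pos_of_pos (by linarith)
  have harg : 1 + β + 2 * ((k + 1 : ℕ) : ℝ) = X + 2 := by push_cast; ring
  have hab : (k + 1) * (Gamma (X + 2))⁻¹ < k * (Gamma X)⁻¹ := by
    rw [Gamma_add_two (by linarith), ← div_eq_mul_inv, ← div_eq_mul_inv,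
      div_lt_div_iff₀ (by positivity) hΓ]
    nlinarith [mul_pos (mul_pos (by linarith : (0 : ℝ) < k) (by linarith : 0 < X - 1)) hΓ]
  have hsq : StrictMonoOn (fun r : ℝ => r ^ 2) (Icc 0 1) :=
    (pow_left_strictMonoOn₀ two_ne_zero).mono Icc_subset_Ici_self
  refine ((strictMonoOn_mul_pow_sub_mul_pow (by positivity) hab).comp hsq
    fun r hr => ⟨sq_nonneg r, pow_le_one₀ hr.1 hr.2⟩).congr fun r _ => ?_
  simp only [Function.comp, mittagLefflerTerm, harg, ← hX, ← pow_mul]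
  ring

theorem strictMonoOn_tsum_neg_one_pow_mul_mittagLefflerTerm {β : ℝ} (hβ : -2 < β) {k : ℕ}
    (hk : 1 ≤ k) :
    StrictMonoOn (fun r => ∑' j, (-1) ^ j * mittagLefflerTerm β (j + k) r) (Icc 0 1) := by
  have hpairs (r : ℝ) (hr : r ∈ Icc 0 1) :=
    (summable_mittagLefflerTerm hβ hk hr).hasSum_neg_one_pow_mul
  refine (StrictMonoOn.tsum (fun m => mittagLefflerTerm_sub_succ_strictMonoOn hβ
    (k := 2 * m + k) (by omega)) fun r hr => ?_).congr fun r hr => ?_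
  · simpa only [add_right_comm _ 1 k] using (hpairs r hr).summable
  · simpa only [add_right_comm _ 1 k] using (hpairs r hr).tsum_eq

/-- Lemma 5.4 (1): for real β > -2 and integer w ≥ 0, the function
r ↦ H(r, β, 2w) = 2 (-1)^(w+1) ∑_{k ≥ w+1} (-1)^k r^(2k)/Γ(1+β+2k)
is strictly increasing on [0, 1]. -/
theorem H_strictMonoOn (β : ℝ) (hβ : -2 < β) (w : ℕ) :
    StrictMonoOn (fun r : ℝ =>
        2 * (-1 : ℝ) ^ (w + 1) *
          ∑' j : ℕ, (-1 : ℝ) ^ (j + w + 1) * r ^ (2 * (j + w + 1)) /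
            Real.Gamma (1 + β + 2 * ((j : ℝ) + w + 1)))
      (Set.Icc 0 1) := by
  refine ((strictMono_mul_left_of_pos two_pos).comp_strictMonoOn
    (strictMonoOn_tsum_neg_one_pow_mul_mittagLefflerTerm hβ (k := w + 1) le_add_self)).congr
    fun r _ => ?_
  have hsign (j : ℕ) : (-1 : ℝ) ^ (w + 1) * (-1) ^ (j + w + 1) = (-1) ^ j := by
    rw [← pow_add, show w + 1 + (j + w + 1) = j + 2 * (w + 1) by ring, pow_add, pow_mul]
    norm_num
  rw [Function.comp_apply, mul_assoc, ← tsum_mul_left (a := (-1 : ℝ) ^ (w + 1))]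
  congr 2 with j
  rw [mittagLefflerTerm, ← hsign j]
  push_cast
  ring_nf
end
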